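/- arXiv:2006.11573 — 2 statements merged into one kernel-verified Lean document; each statement's English description precedes it below -/
import Mathlib

section
/- Let ℒ = max_{j∈[n]} E[L_v v_j], where L_v = (1/n) Σ_{i=1}^n v_i L_i (a smoothness constant of f_v). Then for every x ∈ ℝ^d and every minimizer x* of f: E[‖∇f_v(x) − ∇f_v(x*)‖²] ≤ 2 ℒ · D_f(x, x*). -/
/-!
For every realisation of `v`, the subsampled function `f_v` is convex and `L_v`-smooth, so the
co-coercivity of its gradient gives `‖∇f_v(x) − ∇f_v(x*)‖² ≤ 2 L_v D_{f_v}(x, x*)`. The Bregman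
divergence is linear in the function, hence `L_v D_{f_v}(x, x*) = (1/n) Σⱼ (L_v vⱼ) D_{fⱼ}(x, x*)`.
Taking expectations and bounding each `E[L_v vⱼ]` by `ℒ`, using `D_{fⱼ} ≥ 0`, leaves
`2 ℒ (1/n) Σⱼ D_{fⱼ}(x, x*) = 2 ℒ D_f(x, x*)`.
-/

open MeasureTheory Finset
open scoped RealInnerProductSpace

lemma le_two_mul_mul_of_forall_mul_sub_le {a L D : ℝ} (hL : 0 ≤ L)
    (h : ∀ t : ℝ, t * a - L / 2 * t ^ 2 * a ≤ D) : a ≤ 2 * L * D := by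
  rcases hL.eq_or_lt with rfl | hL
  · suffices a ≤ 0 by simpa
    by_contra! ha
    have := h ((|D| + 1) / a)
    rw [div_mul_cancel₀ _ ha.ne'] at this
    linarith [le_abs_self D]
  · have := h L⁻¹
    field_simp at this
    linarith

section InnerProductSpace

variable {E : Type*} [NormedAddCommGroup E] [InnerProductSpace ℝ E]

def bregman (g : E → ℝ) (g' : E → E) (x y : E) : ℝ := g x - g y - ⟪g' y, x - y⟫

structure IsConvexSmooth (g : E → ℝ) (g' : E → E) (L : ℝ) : Prop where
  le_tangent_add_sq : ∀ x y, g y ≤ g x + ⟪g' x, y - x⟫ + L / 2 * ‖y - x‖ ^ 2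
  tangent_le : ∀ x y, g x + ⟪g' x, y - x⟫ ≤ g y

theorem bregman_const_mul (g : E → ℝ) (g' : E → E) (c : ℝ) (x y : E) :
    bregman (fun x => c * g x) (fun x => c • g' x) x y = c * bregman g g' x y := by
  simp only [bregman, real_inner_smul_left]
  ring

theorem bregman_sum {ι : Type*} (s : Finset ι) (g : ι → E → ℝ) (g' : ι → E → E) (x y : E) :
    bregman (fun x => ∑ i ∈ s, g i x) (fun x => ∑ i ∈ s, g' i x) x y
      = ∑ i ∈ s, bregman (g i) (g' i) x y := by
  simp only [bregman, sum_inner, sum_sub_distrib]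

namespace IsConvexSmooth

variable {g : E → ℝ} {g' : E → E} {L : ℝ}

theorem bregman_nonneg (h : IsConvexSmooth g g' L) (x y : E) : 0 ≤ bregman g g' x y := by
  have := h.tangent_le y x
  unfold bregman
  linarith

theorem nonneg_of_ne (h : IsConvexSmooth g g' L) {x y : E} (hxy : x ≠ y) : 0 ≤ L := by
  have hpos : 0 < ‖y - x‖ ^ 2 := by
    have : y - x ≠ 0 := sub_ne_zero.mpr hxy.symm
    positivity
  have := h.le_tangent_add_sq x y
  have := h.tangent_le x y
  nlinarith

theorem sq_norm_sub_le (h : IsConvexSmooth g g' L) (x y : E) :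
    ‖g' x - g' y‖ ^ 2 ≤ 2 * L * bregman g g' x y := by
  rcases eq_or_ne x y with rfl | hxy
  · simp [bregman]
  refine le_two_mul_mul_of_forall_mul_sub_le (h.nonneg_of_ne hxy) fun t => ?_
  set u := g' x - g' y
  -- the tangent at `y` lies below the quadratic upper bound at `x`, at every point `x - t • u`
  have hlow := h.tangent_le y (x - t • u)
  have hup := h.le_tangent_add_sq x (x - t • u)
  have hu : ⟪g' x, u⟫ - ⟪g' y, u⟫ = ‖u‖ ^ 2 := by
    rw [← inner_sub_left, real_inner_self_eq_norm_sq]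
  rw [show x - t • u - y = (x - y) - t • u by abel, inner_sub_right, real_inner_smul_right]
    at hlow
  rw [show x - t • u - x = -(t • u) by abel, inner_neg_right, real_inner_smul_right, norm_neg,
    norm_smul, mul_pow, Real.norm_eq_abs, sq_abs] at hup
  unfold bregman
  linear_combination hlow + hup - t * hu

theorem const_mul (h : IsConvexSmooth g g' L) {c : ℝ} (hc : 0 ≤ c) :
    IsConvexSmooth (fun x => c * g x) (fun x => c • g' x) (c * L) where
  le_tangent_add_sq x y := by
    have := mul_le_mul_of_nonneg_left (h.le_tangent_add_sq x y) hc
    rw [real_inner_smul_left]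
    linarith
  tangent_le x y := by
    have := mul_le_mul_of_nonneg_left (h.tangent_le x y) hc
    rw [real_inner_smul_left]
    linarith

theorem sum {ι : Type*} (s : Finset ι) {g : ι → E → ℝ} {g' : ι → E → E} {L : ι → ℝ}
    (h : ∀ i ∈ s, IsConvexSmooth (g i) (g' i) (L i)) :
    IsConvexSmooth (fun x => ∑ i ∈ s, g i x) (fun x => ∑ i ∈ s, g' i x) (∑ i ∈ s, L i) where
  le_tangent_add_sq x y := by
    have := sum_le_sum fun i hi => (h i hi).le_tangent_add_sq x y
    simpa only [sum_add_distrib, sum_inner, ← sum_mul, ← sum_div] using this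
  tangent_le x y := by
    have := sum_le_sum fun i hi => (h i hi).tangent_le x y
    simpa only [sum_add_distrib, sum_inner] using this

theorem sq_norm_smul_sum_sub_le {ι : Type*} [Fintype ι] {g : ι → E → ℝ} {g' : ι → E → E}
    {L : ι → ℝ} (h : ∀ i, IsConvexSmooth (g i) (g' i) (L i)) {c : ℝ} (hc : 0 ≤ c)
    {w : ι → ℝ} (hw : ∀ i, 0 ≤ w i) (x y : E) :
    ‖c • ∑ i, w i • g' i x - c • ∑ i, w i • g' i y‖ ^ 2
      ≤ 2 * c * ∑ j, bregman (g j) (g' j) x y * ((c * ∑ i, w i * L i) * w j) := by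
  have hw_sum := (IsConvexSmooth.sum univ fun i _ => (h i).const_mul (hw i)).const_mul hc
  refine (hw_sum.sq_norm_sub_le x y).trans_eq ?_
  simp only [bregman_const_mul, bregman_sum]
  generalize c * ∑ i, w i * L i = Lw
  rw [mul_sum, mul_sum, mul_sum]
  exact sum_congr rfl fun j _ => by ring

end IsConvexSmooth

end InnerProductSpace

section Expectation

variable {Ω : Type*} [MeasurableSpace Ω] {μ : Measure Ω}

theorem integrable_comp_of_finite_range [IsFiniteMeasure μ] {α : Type*} [MeasurableSpace α]
    {X : Ω → α} (hX : Measurable X) (hX_fin : (Set.range X).Finite) {F : α → ℝ}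
    (hF : Measurable F) : Integrable (fun ω => F (X ω)) μ := by
  obtain ⟨C, hC⟩ := (hX_fin.image fun a => ‖F a‖).bddAbove
  exact .of_bound (hF.comp hX).aestronglyMeasurable C
    (ae_of_all _ fun ω => hC ⟨X ω, Set.mem_range_self ω, rfl⟩)

theorem integral_sum_mul_le_sup'_mul_sum {ι : Type*} {s : Finset ι} (hs : s.Nonempty)
    {D : ι → ℝ} (hD : ∀ j ∈ s, 0 ≤ D j) {Z : ι → Ω → ℝ} (hZ : ∀ j ∈ s, Integrable (Z j) μ) :
    ∫ ω, ∑ j ∈ s, D j * Z j ω ∂μ ≤ s.sup' hs (fun j => ∫ ω, Z j ω ∂μ) * ∑ j ∈ s, D j := by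
  rw [integral_finsetSum _ fun j hj => (hZ j hj).const_mul _, mul_sum]
  refine sum_le_sum fun j hj => ?_
  rw [integral_const_mul, mul_comm]
  exact mul_le_mul_of_nonneg_right (le_sup' (fun j => ∫ ω, Z j ω ∂μ) hj) (hD j hj)

end Expectation

theorem stmt_5_general
    {d n : ℕ} (hn : 0 < n)
    {Ω : Type*} [MeasurableSpace Ω] (μ : Measure Ω) [IsProbabilityMeasure μ]
    (f : Fin n → EuclideanSpace ℝ (Fin d) → ℝ)
    (f' : Fin n → EuclideanSpace ℝ (Fin d) → EuclideanSpace ℝ (Fin d))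
    (Li : Fin n → ℝ)
    (hsmooth : ∀ i x y, f i y ≤ f i x + ⟪f' i x, y - x⟫ + Li i / 2 * ‖y - x‖ ^ 2)
    (hconv : ∀ i x y, f i x + ⟪f' i x, y - x⟫ ≤ f i y)
    -- the sampling vector
    (v : Ω → Fin n → ℝ) (hv_meas : Measurable v) (hv_fin : (Set.range v).Finite)
    (hv_nonneg : ∀ ω i, 0 ≤ v ω i)
    (xstar : EuclideanSpace ℝ (Fin d))
    (x : EuclideanSpace ℝ (Fin d)) :
    ∫ ω, ‖(n : ℝ)⁻¹ • ∑ i, v ω i • f' i x - (n : ℝ)⁻¹ • ∑ i, v ω i • f' i xstar‖ ^ 2 ∂μ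
    ≤ 2 * (Finset.univ.sup' ⟨⟨0, hn⟩, Finset.mem_univ _⟩
          (fun j => ∫ ω, ((n : ℝ)⁻¹ * ∑ i, v ω i * Li i) * v ω j ∂μ))
        * ((n : ℝ)⁻¹ * ∑ i, f i x - (n : ℝ)⁻¹ * ∑ i, f i xstar
          - ⟪(n : ℝ)⁻¹ • ∑ j, f' j xstar, x - xstar⟫) := by
  have hf i : IsConvexSmooth (f i) (f' i) (Li i) := ⟨hsmooth i, hconv i⟩
  have hLv_int j : Integrable (fun ω => ((n : ℝ)⁻¹ * ∑ i, v ω i * Li i) * v ω j) μ :=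
    integrable_comp_of_finite_range (F := fun w => ((n : ℝ)⁻¹ * ∑ i, w i * Li i) * w j)
      hv_meas hv_fin (by fun_prop)
  have hgrad_int : Integrable (fun ω =>
      ‖(n : ℝ)⁻¹ • ∑ i, v ω i • f' i x - (n : ℝ)⁻¹ • ∑ i, v ω i • f' i xstar‖ ^ 2) μ :=
    integrable_comp_of_finite_range hv_meas hv_fin
      (F := fun w => ‖(n : ℝ)⁻¹ • ∑ i, w i • f' i x - (n : ℝ)⁻¹ • ∑ i, w i • f' i xstar‖ ^ 2)
      (by fun_prop)
  calc _ ≤ ∫ ω, 2 * (n : ℝ)⁻¹ * ∑ j, bregman (f j) (f' j) x xstar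
          * (((n : ℝ)⁻¹ * ∑ i, v ω i * Li i) * v ω j) ∂μ :=
        integral_mono hgrad_int
          ((integrable_finsetSum _ fun j _ => (hLv_int j).const_mul _).const_mul _)
          fun ω => IsConvexSmooth.sq_norm_smul_sum_sub_le hf (by positivity) (hv_nonneg ω) x xstar
    _ ≤ 2 * (n : ℝ)⁻¹ * (univ.sup' ⟨⟨0, hn⟩, mem_univ _⟩
          (fun j => ∫ ω, ((n : ℝ)⁻¹ * ∑ i, v ω i * Li i) * v ω j ∂μ)
          * ∑ j, bregman (f j) (f' j) x xstar) := by
        rw [integral_const_mul]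
        gcongr
        exact integral_sum_mul_le_sup'_mul_sum _ (fun j _ => (hf j).bregman_nonneg x xstar)
          fun j _ => hLv_int j
    _ = _ := by
        simp only [bregman]
        rw [real_inner_smul_left, sum_inner, sum_sub_distrib, sum_sub_distrib]
        ring

/-- Expected Smoothness, Lemma 2: for a sampling vector `v` (nonnegative,
finitely-valued, `E[vᵢ] = 1`), with `ℒ = max_j E[L_v v_j]` and `L_v = (1/n) Σᵢ vᵢ Lᵢ`,
for every `x` and every minimizer `x*` of `f`:
`E[‖∇f_v(x) − ∇f_v(x*)‖²] ≤ 2 ℒ D_f(x, x*)`. -/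
theorem stmt_5
    {d n : ℕ} (hn : 0 < n)
    {Ω : Type*} [MeasurableSpace Ω] (μ : Measure Ω) [IsProbabilityMeasure μ]
    (f : Fin n → EuclideanSpace ℝ (Fin d) → ℝ)
    (f' : Fin n → EuclideanSpace ℝ (Fin d) → EuclideanSpace ℝ (Fin d))
    (Li : Fin n → ℝ)
    (hsmooth : ∀ i x y, f i y ≤ f i x + ⟪f' i x, y - x⟫ + Li i / 2 * ‖y - x‖ ^ 2)
    (hconv : ∀ i x y, f i x + ⟪f' i x, y - x⟫ ≤ f i y)
    -- the sampling vector
    (v : Ω → Fin n → ℝ) (hv_meas : Measurable v) (hv_fin : (Set.range v).Finite)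
    (hv_nonneg : ∀ ω i, 0 ≤ v ω i) (hv_mean : ∀ i, ∫ ω, v ω i ∂μ = 1)
    -- x* is a minimizer of f = (1/n) Σ f_i
    (xstar : EuclideanSpace ℝ (Fin d))
    (hmin : ∀ y, (n : ℝ)⁻¹ * ∑ i, f i xstar ≤ (n : ℝ)⁻¹ * ∑ i, f i y)
    (x : EuclideanSpace ℝ (Fin d)) :
    ∫ ω, ‖(n : ℝ)⁻¹ • ∑ i, v ω i • f' i x - (n : ℝ)⁻¹ • ∑ i, v ω i • f' i xstar‖ ^ 2 ∂μ
    ≤ 2 * (Finset.univ.sup' ⟨⟨0, hn⟩, Finset.mem_univ _⟩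
          (fun j => ∫ ω, ((n : ℝ)⁻¹ * ∑ i, v ω i * Li i) * v ω j ∂μ))
        * ((n : ℝ)⁻¹ * ∑ i, f i x - (n : ℝ)⁻¹ * ∑ i, f i xstar
          - ⟪(n : ℝ)⁻¹ • ∑ j, f' j xstar, x - xstar⟫) :=
  stmt_5_general hn μ f f' Li hsmooth hconv v hv_meas hv_fin hv_nonneg xstar x
end

section
/- Suppose additionally that σ_0² ≤ G ‖x_0 − x*‖² for some G ≥ 0, that A + BC/(2ρ) > 0, and take the step size γ = 1/(4(A + BC/(2ρ))). Then for every ε > 0 and every integer k ≥ 1: if k ≥ ( 4(A + BC/(2ρ)) + B G / (2(2ρA + BC)) ) · ‖x_0 − x*‖² / ε, then E[f(x̄_k) − f(x*)] ≤ ε, where x̄_k = (1/k) Σ_{j=0}^{k−1} x_j. -/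
/-!
Since `x*` minimizes the `L`-smooth `f`, `∇f(x*) = 0`, so `D_f(x, x*) = f x - f x*`.
Expanding `‖x_{j+1} - x*‖²` and conditioning on `ℱ_j` (the gradient inequality applied to
`E[g_j | ℱ_j] = ∇f(x_j)`) gives, for `a_j = E‖x_j - x*‖²`, `s_j = E σ_j²`, `δ_j = E[f x_j - f x*]`,
  `a_{j+1} ≤ a_j - 2γ δ_j + γ²(2A δ_j + B s_j)`,  `s_{j+1} ≤ (1 - ρ) s_j + 2C δ_j`.
As long as `2γ(A + BC/ρ) ≤ 1`, the Lyapunov function `a_j + (B/ρ) γ² max(s_j, 0)` drops by at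
least `γ δ_j` per step, so `∑_{j<k} δ_j ≤ (1/γ + BγG/ρ) ‖x₀ - x*‖²`; for `γ = 1/(4(A + BC/(2ρ)))`
the constant is `4(A + BC/(2ρ)) + BG/(2(2ρA + BC))`. Jensen's inequality bounds the gap at the
averaged iterate by `(1/k) ∑_{j<k} δ_j`.
-/

open MeasureTheory Finset
open scoped RealInnerProductSpace

section

variable {E : Type*} [NormedAddCommGroup E] [InnerProductSpace ℝ E]

theorem eq_zero_of_quadratic_upper_bound_of_minimizer {f : E → ℝ} {v x : E} {L : ℝ} (hL : 0 < L)
    (hsmooth : ∀ y, f y ≤ f x + ⟪v, y - x⟫ + L / 2 * ‖y - x‖ ^ 2) (hmin : ∀ y, f x ≤ f y) :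
    v = 0 := by
  have h := (hmin (x - L⁻¹ • v)).trans (hsmooth (x - L⁻¹ • v))
  rw [sub_sub_cancel_left, inner_neg_right, real_inner_smul_right, real_inner_self_eq_norm_sq,
    norm_neg, norm_smul, Real.norm_of_nonneg (inv_nonneg.2 hL.le)] at h
  have : ‖v‖ ^ 2 ≤ 0 := by
    field_simp at h; nlinarith
  simpa using this

theorem convexOn_univ_of_le_add_inner {f : E → ℝ} {f' : E → E}
    (hconv : ∀ x y, f x + ⟪f' x, y - x⟫ ≤ f y) : ConvexOn ℝ Set.univ f := by
  refine ⟨convex_univ, fun x _ y _ a b ha hb hab => ?_⟩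
  set z := a • x + b • y
  have hz : a • (x - z) + b • (y - z) = 0 := by
    rw [smul_sub, smul_sub, sub_add_sub_comm, ← add_smul, hab, one_smul, sub_self]
  have := congrArg (⟪f' z, ·⟫) hz
  simp only [inner_add_right, real_inner_smul_right, inner_zero_right] at this
  have hfz : f z = a * f z + b * f z := by rw [← add_mul, hab, one_mul]
  rw [smul_eq_mul, smul_eq_mul]
  linarith [mul_le_mul_of_nonneg_left (hconv z x) ha, mul_le_mul_of_nonneg_left (hconv z y) hb]

theorem max_zero_le_mul_max_zero_add {s s' r c : ℝ} (hr : 0 ≤ r) (hc : 0 ≤ c)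
    (h : s' ≤ r * s + c) : max s' 0 ≤ r * max s 0 + c :=
  max_le (h.trans (by gcongr; exact le_max_left _ _)) (by positivity)

theorem sum_le_of_lyapunov {a s δ : ℕ → ℝ} {A B C ρ γ G : ℝ} (hB : 0 ≤ B) (hC : 0 ≤ C)
    (hρ : 0 < ρ) (hρ1 : ρ ≤ 1) (hγ : 0 < γ) (hstep : 2 * γ * (A + B / ρ * C) ≤ 1)
    (ha : ∀ j, 0 ≤ a j) (hδ : ∀ j, 0 ≤ δ j)
    (ha_succ : ∀ j, a (j + 1) ≤ a j - 2 * γ * δ j + γ ^ 2 * (2 * A * δ j + B * s j))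
    (hs_succ : ∀ j, s (j + 1) ≤ (1 - ρ) * s j + 2 * C * δ j)
    (hG : 0 ≤ G) (hs₀ : s 0 ≤ G * a 0) (n : ℕ) :
    ∑ j ∈ range n, δ j ≤ (γ⁻¹ + B / ρ * γ * G) * a 0 := by
  -- `s` may be negative, so the Lyapunov function uses `max (s j) 0`; the weight `M` is chosen
  -- so that the `s`-terms cancel: `B γ² + M (1 - ρ) = M`.
  set M := B / ρ * γ ^ 2
  have hM : 0 ≤ M := by positivity
  set V : ℕ → ℝ := fun j => a j + M * max (s j) 0
  have hV_succ : ∀ j, γ * δ j ≤ V j - V (j + 1) := by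
    intro j
    have ht_succ : max (s (j + 1)) 0 ≤ (1 - ρ) * max (s j) 0 + 2 * C * δ j :=
      max_zero_le_mul_max_zero_add (by linarith) (by have := hδ j; positivity) (hs_succ j)
    have hBs : γ ^ 2 * (B * s j) ≤ γ ^ 2 * (B * max (s j) 0) := by
      gcongr
      exact le_max_left _ _
    have hMt : M * max (s (j + 1)) 0
        ≤ M * max (s j) 0 - γ ^ 2 * (B * max (s j) 0) + 2 * γ ^ 2 * (B / ρ * C) * δ j :=
      calc _ ≤ M * ((1 - ρ) * max (s j) 0 + 2 * C * δ j) := mul_le_mul_of_nonneg_left ht_succ hM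
        _ = _ := by simp only [M]; field_simp
    have hdrop : 2 * γ ^ 2 * (A + B / ρ * C) * δ j ≤ γ * δ j := by
      have := mul_le_mul_of_nonneg_left hstep (mul_nonneg hγ.le (hδ j))
      linarith
    simp only [V]
    linarith [ha_succ j]
  have htel : γ * ∑ j ∈ range n, δ j ≤ V 0 - V n := by
    rw [mul_sum, ← sum_range_sub' V]
    exact sum_le_sum fun j _ => hV_succ j
  have hVn : 0 ≤ V n := add_nonneg (ha n) (mul_nonneg hM (le_max_right _ _))
  have hV₀ : V 0 ≤ (1 + M * G) * a 0 := by
    have := mul_le_mul_of_nonneg_left (max_le hs₀ (mul_nonneg hG (ha 0))) hM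
    simp only [V]
    linarith
  have hbound : γ * ((γ⁻¹ + B / ρ * γ * G) * a 0) = (1 + M * G) * a 0 := by
    simp only [M]; field_simp
  exact le_of_mul_le_mul_left (by linarith) hγ

section Stochastic

variable {Ω : Type*} {m m0 : MeasurableSpace Ω} {μ : Measure Ω}

theorem integrable_inner_of_memLp_two {X Y : Ω → E} (hX : MemLp X 2 μ) (hY : MemLp Y 2 μ) :
    Integrable (fun ω => ⟪X ω, Y ω⟫) μ :=
  (L2.integrable_inner hX.toLp hY.toLp).congr <| by
    filter_upwards [hX.coeFn_toLp, hY.coeFn_toLp] with ω hXω hYω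
    rw [hXω, hYω]

variable [IsFiniteMeasure μ]

theorem integral_le_add_of_condExp_le (hm : m ≤ m0) {X U V : Ω → ℝ} {b c : ℝ}
    (hU : Integrable U μ) (hV : Integrable V μ) (h : μ[X | m] ≤ᵐ[μ] fun ω => b * U ω + c * V ω) :
    ∫ ω, X ω ∂μ ≤ b * ∫ ω, U ω ∂μ + c * ∫ ω, V ω ∂μ := by
  rw [← integral_condExp hm, ← integral_const_mul, ← integral_const_mul,
    ← integral_add (hU.const_mul b) (hV.const_mul c)]
  exact integral_mono_ae integrable_condExp ((hU.const_mul b).add (hV.const_mul c)) h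

theorem integral_sub_le_integral_inner_of_condExp_eq [CompleteSpace E] (hm : m ≤ m0)
    {f : E → ℝ} {f' : E → E} (hconv : ∀ x y, f x + ⟪f' x, y - x⟫ ≤ f y) {X G : Ω → E}
    (hX : StronglyMeasurable[m] X) (hG : Integrable G μ) (hf : Integrable (fun ω => f (X ω)) μ)
    (hunbiased : μ[G | m] =ᵐ[μ] fun ω => f' (X ω)) (x' : E)
    (hXG : Integrable (fun ω => ⟪X ω - x', G ω⟫) μ) :
    ∫ ω, (f (X ω) - f x') ∂μ ≤ ∫ ω, ⟪X ω - x', G ω⟫ ∂μ := by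
  have hpull : μ[fun ω => ⟪X ω - x', G ω⟫ | m] =ᵐ[μ] fun ω => ⟪X ω - x', f' (X ω)⟫ := by
    have hpull₀ : μ[fun ω => ⟪X ω - x', G ω⟫ | m] =ᵐ[μ] fun ω => ⟪X ω - x', (μ[G | m]) ω⟫ :=
      condExp_bilin_of_stronglyMeasurable_left (innerSL ℝ) (hX.sub stronglyMeasurable_const) hXG hG
    filter_upwards [hpull₀, hunbiased] with ω hpull hω
    rw [hpull, hω]
  have hgrad : ∀ ω, f (X ω) - f x' ≤ ⟪X ω - x', f' (X ω)⟫ := fun ω => by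
    have := hconv (X ω) x'
    rw [← neg_sub, inner_neg_right, real_inner_comm] at this
    linarith
  calc ∫ ω, (f (X ω) - f x') ∂μ ≤ ∫ ω, ⟪X ω - x', f' (X ω)⟫ ∂μ :=
        integral_mono (hf.sub (integrable_const _)) (integrable_condExp.congr hpull) hgrad
    _ = ∫ ω, (μ[fun ω => ⟪X ω - x', G ω⟫ | m]) ω ∂μ := (integral_congr_ae hpull).symm
    _ = ∫ ω, ⟪X ω - x', G ω⟫ ∂μ := integral_condExp hm

theorem integral_norm_sub_smul_sub_sq_le [CompleteSpace E] (hm : m ≤ m0)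
    {f : E → ℝ} {f' : E → E} (hconv : ∀ x y, f x + ⟪f' x, y - x⟫ ≤ f y) {X G : Ω → E}
    (hX : StronglyMeasurable[m] X) (hX₂ : MemLp X 2 μ) (hG₂ : MemLp G 2 μ)
    (hf : Integrable (fun ω => f (X ω)) μ) (hunbiased : μ[G | m] =ᵐ[μ] fun ω => f' (X ω))
    (x' : E) {γ : ℝ} (hγ : 0 ≤ γ) :
    ∫ ω, ‖X ω - γ • G ω - x'‖ ^ 2 ∂μ ≤ ∫ ω, ‖X ω - x'‖ ^ 2 ∂μ
      - 2 * γ * ∫ ω, (f (X ω) - f x') ∂μ + γ ^ 2 * ∫ ω, ‖G ω‖ ^ 2 ∂μ := by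
  have hXx' : MemLp (fun ω => X ω - x') 2 μ := hX₂.sub (memLp_const x')
  have hinner := integrable_inner_of_memLp_two hXx' hG₂
  have hexpand : ∀ ω, ‖X ω - γ • G ω - x'‖ ^ 2
      = ‖X ω - x'‖ ^ 2 - 2 * γ * ⟪X ω - x', G ω⟫ + γ ^ 2 * ‖G ω‖ ^ 2 := by
    intro ω
    rw [sub_right_comm, norm_sub_sq_real, real_inner_smul_right, norm_smul, mul_pow,
      Real.norm_eq_abs, sq_abs]
    ring
  have hsq : ∀ {Y : Ω → E}, MemLp Y 2 μ → Integrable (fun ω => ‖Y ω‖ ^ 2) μ :=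
    fun hY => (memLp_two_iff_integrable_sq_norm hY.1).1 hY
  have hgap := integral_sub_le_integral_inner_of_condExp_eq hm hconv hX
    (hG₂.integrable one_le_two) hf hunbiased x' hinner
  simp only [hexpand]
  rw [integral_add, integral_sub (hsq hXx') (hinner.const_mul _), integral_const_mul,
    integral_const_mul]
  · nlinarith
  · exact (hsq hXx').sub (hinner.const_mul _)
  · exact (hsq hG₂).const_mul _

theorem integral_map_average_sub_le {f : E → ℝ} (hf : ConvexOn ℝ Set.univ f) {c : ℝ}
    (hc : ∀ y, c ≤ f y) {X : ℕ → Ω → E} (hX : ∀ j, Integrable (fun ω => f (X j ω)) μ) {k : ℕ}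
    (hk : k ≠ 0) :
    ∫ ω, (f ((k : ℝ)⁻¹ • ∑ j ∈ range k, X j ω) - c) ∂μ
      ≤ (k : ℝ)⁻¹ * ∑ j ∈ range k, ∫ ω, (f (X j ω) - c) ∂μ := by
  have hjensen : ∀ ω, f ((k : ℝ)⁻¹ • ∑ j ∈ range k, X j ω) - c
      ≤ (k : ℝ)⁻¹ * ∑ j ∈ range k, (f (X j ω) - c) := by
    intro ω
    have := hf.map_sum_le (t := range k) (w := fun _ => (k : ℝ)⁻¹) (p := fun j => X j ω)
      (fun _ _ => by positivity) (by simp [hk]) (fun _ _ => Set.mem_univ _)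
    rw [← smul_sum, ← smul_sum, smul_eq_mul] at this
    rw [sum_sub_distrib, sum_const, card_range, nsmul_eq_mul, mul_sub,
      inv_mul_cancel_left₀ (Nat.cast_ne_zero.2 hk)]
    linarith
  have hint : ∀ j, Integrable (fun ω => f (X j ω) - c) μ := fun j => (hX j).sub (integrable_const c)
  rw [← integral_finsetSum _ fun j _ => hint j, ← integral_const_mul]
  exact integral_mono_of_nonneg (ae_of_all _ fun ω => sub_nonneg.2 (hc _))
    ((integrable_finsetSum _ fun j _ => hint j).const_mul _) (ae_of_all _ hjensen)

end Stochastic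

theorem sgd_sum_integral_sub_le [CompleteSpace E] {Ω : Type*} {m0 : MeasurableSpace Ω}
    {μ : Measure Ω} [IsProbabilityMeasure μ]
    (ℱ : Filtration ℕ m0) {f : E → ℝ} {f' : E → E} (hconv : ∀ x y, f x + ⟪f' x, y - x⟫ ≤ f y)
    {x' x₀ : E} (hmin : ∀ y, f x' ≤ f y) {A B C ρ γ G σ₀ : ℝ} (hB : 0 ≤ B) (hC : 0 ≤ C)
    (hρ : 0 < ρ) (hρ1 : ρ ≤ 1) (hγ : 0 < γ) (hstep : 2 * γ * (A + B / ρ * C) ≤ 1) (hG : 0 ≤ G)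
    {x g : ℕ → Ω → E} {σ2 : ℕ → Ω → ℝ} (hx₀ : ∀ ω, x 0 ω = x₀) (hσ₀ : ∀ ω, σ2 0 ω = σ₀)
    (hσ₀G : σ₀ ≤ G * ‖x₀ - x'‖ ^ 2)
    (hx_meas : ∀ k, StronglyMeasurable[ℱ k] (x k))
    (hg_meas : ∀ k, StronglyMeasurable[ℱ (k + 1)] (g k))
    (hg_int : ∀ k, Integrable (fun ω => ‖g k ω‖ ^ 2) μ)
    (hσ_int : ∀ k, Integrable (σ2 k) μ)
    (hf_int : ∀ k, Integrable (fun ω => f (x k ω)) μ)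
    (hunbiased : ∀ k, μ[g k | ℱ k] =ᵐ[μ] fun ω => f' (x k ω))
    (hvar : ∀ k, μ[fun ω => ‖g k ω‖ ^ 2 | ℱ k]
      ≤ᵐ[μ] fun ω => 2 * A * (f (x k ω) - f x') + B * σ2 k ω)
    (hnoise : ∀ k, μ[σ2 (k + 1) | ℱ k]
      ≤ᵐ[μ] fun ω => (1 - ρ) * σ2 k ω + 2 * C * (f (x k ω) - f x'))
    (hiter : ∀ k ω, x (k + 1) ω = x k ω - γ • g k ω) (n : ℕ) :
    ∑ j ∈ range n, ∫ ω, (f (x j ω) - f x') ∂μ ≤ (γ⁻¹ + B / ρ * γ * G) * ‖x₀ - x'‖ ^ 2 := by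
  have hg₂ : ∀ j, MemLp (g j) 2 μ := fun j => (memLp_two_iff_integrable_sq_norm
    ((hg_meas j).mono (ℱ.le _)).aestronglyMeasurable).2 (hg_int j)
  have hx₂ : ∀ j, MemLp (x j) 2 μ := by
    intro j
    induction j with
    | zero => rw [funext hx₀]; exact memLp_const x₀
    | succ j ih => rw [funext (hiter j)]; exact ih.sub ((hg₂ j).const_smul γ)
  have hgap : ∀ j, Integrable (fun ω => f (x j ω) - f x') μ :=
    fun j => (hf_int j).sub (integrable_const _)
  have hdist : ∀ j, ∫ ω, ‖x (j + 1) ω - x'‖ ^ 2 ∂μ ≤ ∫ ω, ‖x j ω - x'‖ ^ 2 ∂μ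
      - 2 * γ * ∫ ω, (f (x j ω) - f x') ∂μ
      + γ ^ 2 * (2 * A * ∫ ω, (f (x j ω) - f x') ∂μ + B * ∫ ω, σ2 j ω ∂μ) := fun j => by
    simp only [hiter]
    refine (integral_norm_sub_smul_sub_sq_le (ℱ.le j) hconv (hx_meas j) (hx₂ j) (hg₂ j)
      (hf_int j) (hunbiased j) x' hγ.le).trans ?_
    gcongr
    exact integral_le_add_of_condExp_le (ℱ.le j) (hgap j) (hσ_int j) (hvar j)
  simpa only [hx₀, integral_const, smul_eq_mul, probReal_univ, one_mul] using
    sum_le_of_lyapunov (a := fun j => ∫ ω, ‖x j ω - x'‖ ^ 2 ∂μ) (s := fun j => ∫ ω, σ2 j ω ∂μ)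
      (δ := fun j => ∫ ω, (f (x j ω) - f x') ∂μ) hB hC hρ hρ1 hγ hstep (fun j => integral_nonneg fun ω => sq_nonneg _)
      (fun j => integral_nonneg fun ω => sub_nonneg.2 (hmin _)) hdist
      (fun j => integral_le_add_of_condExp_le (ℱ.le j) (hσ_int j) (hgap j) (hnoise j)) hG
      (by simpa only [hx₀, hσ₀, integral_const, smul_eq_mul, probReal_univ, one_mul] using hσ₀G) n

end

theorem stmt_12_general
    {d : ℕ} {Ω : Type*} {m0 : MeasurableSpace Ω} {μ : Measure Ω} [IsProbabilityMeasure μ]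
    (ℱ : MeasureTheory.Filtration ℕ m0)
    (f : EuclideanSpace ℝ (Fin d) → ℝ)
    (f' : EuclideanSpace ℝ (Fin d) → EuclideanSpace ℝ (Fin d))
    (L A B C ρ : ℝ)
    (hL : 0 < L) (hA : 0 ≤ A) (hB : 0 ≤ B) (hC : 0 ≤ C)
    (hρ : 0 < ρ) (hρ1 : ρ ≤ 1)
    (hsmooth : ∀ x y, f y ≤ f x + ⟪f' x, y - x⟫ + L / 2 * ‖y - x‖ ^ 2)
    (hconvf : ∀ x y, f x + ⟪f' x, y - x⟫ ≤ f y)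
    (xstar : EuclideanSpace ℝ (Fin d))
    (hmin : ∀ y, f xstar ≤ f y)
    -- σ₀² ≤ G‖x₀−x*‖², A + BC/(2ρ) > 0, and γ = 1/(4(A + BC/(2ρ)))
    (G : ℝ) (hG : 0 ≤ G)
    (hpos : 0 < A + B * C / (2 * ρ))
    (γ : ℝ) (hγ : γ = 1 / (4 * (A + B * C / (2 * ρ))))
    (x g : ℕ → Ω → EuclideanSpace ℝ (Fin d)) (σ2 : ℕ → Ω → ℝ)
    (x0 : EuclideanSpace ℝ (Fin d)) (σ0sq : ℝ)
    (hx0 : ∀ ω, x 0 ω = x0) (hσ0 : ∀ ω, σ2 0 ω = σ0sq)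
    (hσ0G : σ0sq ≤ G * ‖x0 - xstar‖ ^ 2)
    (hx_meas : ∀ k, StronglyMeasurable[ℱ k] (x k))
    (hg_meas : ∀ k, StronglyMeasurable[ℱ (k + 1)] (g k))
    (hg_int : ∀ k, Integrable (fun ω => ‖g k ω‖ ^ 2) μ)
    (hσ_int : ∀ k, Integrable (σ2 k) μ)
    (hf_int : ∀ k, Integrable (fun ω => f (x k ω)) μ)
    (hunbiased : ∀ k, μ[g k | ℱ k] =ᵐ[μ] fun ω => f' (x k ω))
    (hvar : ∀ k, μ[fun ω => ‖g k ω - f' xstar‖ ^ 2 | ℱ k]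
      ≤ᵐ[μ] fun ω => 2 * A * (f (x k ω) - f xstar - ⟪f' xstar, x k ω - xstar⟫)
        + B * σ2 k ω)
    (hnoise : ∀ k, μ[σ2 (k + 1) | ℱ k]
      ≤ᵐ[μ] fun ω => (1 - ρ) * σ2 k ω
        + 2 * C * (f (x k ω) - f xstar - ⟪f' xstar, x k ω - xstar⟫))
    -- the iterates: x_{k+1} = x_k − γ g_k
    (hiter : ∀ k ω, x (k + 1) ω = x k ω - γ • g k ω)
    (ε : ℝ) (hε : 0 < ε) (k : ℕ) (hk : 1 ≤ k)
    (hklarge : (4 * (A + B * C / (2 * ρ)) + B * G / (2 * (2 * ρ * A + B * C)))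
      * ‖x0 - xstar‖ ^ 2 / ε ≤ (k : ℝ)) :
    ∫ ω, (f ((k : ℝ)⁻¹ • ∑ j ∈ range k, x j ω) - f xstar) ∂μ ≤ ε := by
  have hstar : f' xstar = 0 := eq_zero_of_quadratic_upper_bound_of_minimizer hL (hsmooth xstar) hmin
  simp only [hstar, inner_zero_left, sub_zero] at hvar hnoise
  have hγ₀ : 0 < γ := by rw [hγ]; positivity
  have hstep : 2 * γ * (A + B / ρ * C) ≤ 1 := by
    have hγP : γ * (4 * (A + B * C / (2 * ρ))) = 1 := by
      rw [hγ, one_div, inv_mul_cancel₀ (by positivity)]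
    have hBC : B / ρ * C = 2 * (B * C / (2 * ρ)) := by field_simp
    nlinarith
  have hsum := sgd_sum_integral_sub_le ℱ hconvf hmin hB hC hρ hρ1 hγ₀ hstep hG hx0 hσ0 hσ0G
    hx_meas hg_meas hg_int hσ_int hf_int hunbiased hvar hnoise hiter k
  have hK : γ⁻¹ + B / ρ * γ * G
      = 4 * (A + B * C / (2 * ρ)) + B * G / (2 * (2 * ρ * A + B * C)) := by
    have : 2 * ρ * A + B * C = 2 * ρ * (A + B * C / (2 * ρ)) := by field_simp
    rw [this, hγ]
    field_simp
    ring
  rw [hK] at hsum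
  rw [div_le_iff₀ hε] at hklarge
  calc _ ≤ (k : ℝ)⁻¹ * ∑ j ∈ range k, ∫ ω, (f (x j ω) - f xstar) ∂μ :=
        integral_map_average_sub_le (convexOn_univ_of_le_add_inner hconvf) hmin hf_int (by omega)
    _ ≤ ε := by
      rw [inv_mul_le_iff₀ (by positivity)]
      linarith

/-- Corollary, iteration complexity of variance reduced methods:
if `σ₀² ≤ G‖x₀−x*‖²`, `A + BC/(2ρ) > 0` and `γ = 1/(4(A+BC/(2ρ)))`, then
`k ≥ (4(A+BC/(2ρ)) + BG/(2(2ρA+BC)))·‖x₀−x*‖²/ε` implies `E[f(x̄_k) − f(x*)] ≤ ε`. -/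
theorem stmt_12
    {d : ℕ} {Ω : Type*} {m0 : MeasurableSpace Ω} {μ : Measure Ω} [IsProbabilityMeasure μ]
    (ℱ : MeasureTheory.Filtration ℕ m0)
    (f : EuclideanSpace ℝ (Fin d) → ℝ)
    (f' : EuclideanSpace ℝ (Fin d) → EuclideanSpace ℝ (Fin d))
    (L A B C ρ : ℝ)
    (hL : 0 < L) (hA : 0 ≤ A) (hB : 0 ≤ B) (hC : 0 ≤ C)
    (hρ : 0 < ρ) (hρ1 : ρ ≤ 1)
    (hsmooth : ∀ x y, f y ≤ f x + ⟪f' x, y - x⟫ + L / 2 * ‖y - x‖ ^ 2)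
    (hconvf : ∀ x y, f x + ⟪f' x, y - x⟫ ≤ f y)
    (xstar : EuclideanSpace ℝ (Fin d))
    (hmin : ∀ y, f xstar ≤ f y)
    -- σ₀² ≤ G‖x₀−x*‖², A + BC/(2ρ) > 0, and γ = 1/(4(A + BC/(2ρ)))
    (G : ℝ) (hG : 0 ≤ G)
    (hpos : 0 < A + B * C / (2 * ρ))
    (γ : ℝ) (hγ : γ = 1 / (4 * (A + B * C / (2 * ρ))))
    (x g : ℕ → Ω → EuclideanSpace ℝ (Fin d)) (σ2 : ℕ → Ω → ℝ)
    (x0 : EuclideanSpace ℝ (Fin d)) (σ0sq : ℝ)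
    (hx0 : ∀ ω, x 0 ω = x0) (hσ0 : ∀ ω, σ2 0 ω = σ0sq)
    (hσ0G : σ0sq ≤ G * ‖x0 - xstar‖ ^ 2)
    (hx_meas : ∀ k, StronglyMeasurable[ℱ k] (x k))
    (hσ_meas : ∀ k, StronglyMeasurable[ℱ k] (σ2 k))
    (hg_meas : ∀ k, StronglyMeasurable[ℱ (k + 1)] (g k))
    (hg_int : ∀ k, Integrable (fun ω => ‖g k ω‖ ^ 2) μ)
    (hσ_int : ∀ k, Integrable (σ2 k) μ)
    (hf_int : ∀ k, Integrable (fun ω => f (x k ω)) μ)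
    (hunbiased : ∀ k, μ[g k | ℱ k] =ᵐ[μ] fun ω => f' (x k ω))
    (hvar : ∀ k, μ[fun ω => ‖g k ω - f' xstar‖ ^ 2 | ℱ k]
      ≤ᵐ[μ] fun ω => 2 * A * (f (x k ω) - f xstar - ⟪f' xstar, x k ω - xstar⟫)
        + B * σ2 k ω)
    (hnoise : ∀ k, μ[σ2 (k + 1) | ℱ k]
      ≤ᵐ[μ] fun ω => (1 - ρ) * σ2 k ω
        + 2 * C * (f (x k ω) - f xstar - ⟪f' xstar, x k ω - xstar⟫))
    -- the iterates: x_{k+1} = x_k − γ g_k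
    (hiter : ∀ k ω, x (k + 1) ω = x k ω - γ • g k ω)
    (ε : ℝ) (hε : 0 < ε) (k : ℕ) (hk : 1 ≤ k)
    (hklarge : (4 * (A + B * C / (2 * ρ)) + B * G / (2 * (2 * ρ * A + B * C)))
      * ‖x0 - xstar‖ ^ 2 / ε ≤ (k : ℝ)) :
    ∫ ω, (f ((k : ℝ)⁻¹ • ∑ j ∈ range k, x j ω) - f xstar) ∂μ ≤ ε :=
  stmt_12_general ℱ f f' L A B C ρ hL hA hB hC hρ hρ1 hsmooth hconvf xstar hmin G hG hpos γ hγ x g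
    σ2 x0 σ0sq hx0 hσ0 hσ0G hx_meas hg_meas hg_int hσ_int hf_int hunbiased hvar hnoise hiter ε hε k
    hk hklarge
end
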